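/- arXiv:2402.08836 — 2 statements merged into one kernel-verified Lean document; each statement's English description precedes it below -/
import Mathlib

section
/- For every real parameter a, the function H_a is a first integral of the vector field v_a: for every (r,z) ∈ ℝ², the Fréchet derivative of H_a at (r,z) applied to the vector v_a(r,z) equals 0. -/
/-- The Hamiltonian `H_a(r,z) = r²(r² + z² + a)`. -/
noncomputable def Ha (a : ℝ) : ℝ × ℝ → ℝ :=
  fun p => p.1 ^ 2 * (p.1 ^ 2 + p.2 ^ 2 + a)

/-- The vector field `v_a(r,z) = (−2rz, 2(2r² + z² + a))`. -/
noncomputable def vA (a : ℝ) : ℝ × ℝ → ℝ × ℝ :=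
  fun p => (-2 * p.1 * p.2, 2 * (2 * p.1 ^ 2 + p.2 ^ 2 + a))

/-!
The differential of `H_a` at `(r, z)` is `r` times the covector
`L = 2(2r² + z² + a) dr + 2rz dz`, and `v_a(r, z) = (-L(0,1), L(1,0))` is the symplectic
gradient of `L`. A covector on the plane kills its own symplectic gradient, so
`dH_a(v_a) = r · L(-L(0,1), L(1,0)) = 0`.
-/

theorem map_neg_map_zero_one_map_one_zero {R F : Type*} [CommRing R] [FunLike F (R × R) R]
    [LinearMapClass F R (R × R) R] (L : F) : L (-L (0, 1), L (1, 0)) = 0 := by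
  have hdecomp : ∀ x y : R, L (x, y) = x * L (1, 0) + y * L (0, 1) := fun x y => by
    rw [← smul_eq_mul, ← smul_eq_mul, ← map_smul, ← map_smul, ← map_add]
    simp
  rw [hdecomp]
  ring

noncomputable def reducedDiffHa (a : ℝ) (p : ℝ × ℝ) : ℝ × ℝ →L[ℝ] ℝ :=
  (2 * (2 * p.1 ^ 2 + p.2 ^ 2 + a)) • ContinuousLinearMap.fst ℝ ℝ ℝ +
    (2 * p.1 * p.2) • ContinuousLinearMap.snd ℝ ℝ ℝ

theorem hasFDerivAt_Ha (a : ℝ) (p : ℝ × ℝ) :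
    HasFDerivAt (Ha a) (p.1 • reducedDiffHa a p) p := by
  have hr : HasFDerivAt (fun q : ℝ × ℝ => q.1) (ContinuousLinearMap.fst ℝ ℝ ℝ) p :=
    hasFDerivAt_fst
  have hz : HasFDerivAt (fun q : ℝ × ℝ => q.2) (ContinuousLinearMap.snd ℝ ℝ ℝ) p :=
    hasFDerivAt_snd
  refine ((hr.pow 2).mul (((hr.pow 2).add (hz.pow 2)).add_const a)).congr_fderiv ?_
  ext <;>
  simp only [reducedDiffHa, Nat.add_one_sub_one, pow_one, nsmul_eq_mul, Nat.cast_ofNat, smul_add,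
    Pi.add_apply, ContinuousLinearMap.add_comp, ContinuousLinearMap.smul_comp,
    ContinuousLinearMap.fst_comp_inl, ContinuousLinearMap.snd_comp_inl,
    ContinuousLinearMap.fst_comp_inr, ContinuousLinearMap.snd_comp_inr, smul_zero, zero_add,
    add_zero, add_apply, smul_apply, ContinuousLinearMap.id_apply, smul_eq_mul, mul_one] <;>
  ring

theorem vA_eq_symplecticGradient (a : ℝ) (p : ℝ × ℝ) :
    vA a p = (-reducedDiffHa a p (0, 1), reducedDiffHa a p (1, 0)) := by
  simp [vA, reducedDiffHa]

/-- `H_a` is a first integral of `v_a`: the Fréchet derivative of `H_a` at any point,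
applied to `v_a` at that point, vanishes. -/
theorem stmt1 (a : ℝ) (p : ℝ × ℝ) :
    fderiv ℝ (Ha a) p (vA a p) = 0 := by
  rw [(hasFDerivAt_Ha a p).fderiv, vA_eq_symplecticGradient, smul_apply,
    map_neg_map_zero_one_map_one_zero, smul_zero]
end

section
/- If a < 0, then the zero set of the vector field v_a in ℝ² is exactly the four points {(0, √(−a)), (0, −√(−a)), (√(−a/2), 0), (−√(−a/2), 0)}. -/
/-- For `a < 0`, the zero set of `v_a` is exactly the four points
`(0, ±√(−a))` and `(±√(−a/2), 0)`. -/
theorem stmt4 (a : ℝ) (ha : a < 0) :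
    {p : ℝ × ℝ | vA a p = (0, 0)} =
      {((0 : ℝ), Real.sqrt (-a)), ((0 : ℝ), -Real.sqrt (-a)),
        (Real.sqrt (-a / 2), (0 : ℝ)), (-Real.sqrt (-a / 2), (0 : ℝ))} := by
  have h1 : Real.sqrt (-a) ^ 2 = -a := Real.sq_sqrt (by linarith)
  have h2 : Real.sqrt (-a / 2) ^ 2 = -a / 2 := Real.sq_sqrt (by linarith)
  ext ⟨r, z⟩
  simp only [vA, Set.mem_setOf_eq, Prod.mk.injEq, Set.mem_insert_iff,
    Set.mem_singleton_iff]
  constructor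
  · rintro ⟨hrz, hsum⟩
    have hrz' : r * z = 0 := by linarith [mul_comm r z]
    rcases mul_eq_zero.mp hrz' with hr | hz
    · subst hr
      have hz2 : z ^ 2 = -a := by nlinarith
      have : z = Real.sqrt (-a) ∨ z = -Real.sqrt (-a) := by
        have := sq_eq_sq_iff_eq_or_eq_neg (a := z) (b := Real.sqrt (-a))
        rcases abs_eq (Real.sqrt_nonneg (-a)) |>.mp (by
          rw [← Real.sqrt_sq_eq_abs, hz2]) with h | h
        · exact Or.inl h
        · exact Or.inr h
      tauto
    · subst hz
      have hr2 : r ^ 2 = -a / 2 := by nlinarith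
      have : r = Real.sqrt (-a / 2) ∨ r = -Real.sqrt (-a / 2) := by
        rcases abs_eq (Real.sqrt_nonneg (-a / 2)) |>.mp (by
          rw [← Real.sqrt_sq_eq_abs, hr2]) with h | h
        · exact Or.inl h
        · exact Or.inr h
      tauto
  · rintro (⟨h, h'⟩ | ⟨h, h'⟩ | ⟨h, h'⟩ | ⟨h, h'⟩) <;> subst h <;> subst h' <;>
      constructor <;> nlinarith
end
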